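/- In the weighted graph G_{a,b}, if the sets a and b are not disjoint (i.e., there exists an index i with a(i) = b(i) = 1), then the weighted distance between l_ν and r_μ is at least 2 + 1/p, where ν = i mod k and μ = k + ⌊i/k⌋; consequently the weighted diameter of G_{a,b} equals 2 + 1/p. -/

import Mathlib

/-!
Every vertex is within distance `1` of its centre (`cL` for `L`, `cR` for `R`) and the centres
are `1/p` apart, so the diameter is at most `2 + 1/p`.

For the lower bound we use a potential `φ` with `φ y ≤ φ x + w x y` on every edge, so that
`φ v - φ u` bounds `dist(u, v)` from below. Put `level(l_ν) = 0`, `level(l_μ) = 2` and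
`level = 1` on the other left vertices and on `cL`; `φ` is `level` on the left and `level + 1/p`
on the right (copying the level of the partner across the cut). This is `1`-Lipschitz along
every unit edge except `l_ν l_μ` and `r_ν r_μ`; these are absent since `ν` and `μ` lie in
different cliques and `i ∈ a ∩ b`. Hence `dist(l_ν, r_μ) ≥ φ(r_μ) - φ(l_ν) = 2 + 1/p`.
-/

open scoped ENNReal Classical

/-- Weight of a path given as a list of vertices. -/
noncomputable def pathWeight {V : Type*} (w : V → V → ℝ≥0∞) : List V → ℝ≥0∞
  | [] => 0
  | [_] => 0
  | x :: y :: rest => w x y + pathWeight w (y :: rest)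

/-- Weighted shortest-path distance. -/
noncomputable def wdist {V : Type*} (w : V → V → ℝ≥0∞) (u v : V) : ℝ≥0∞ :=
  sInf {c | ∃ l : List V, l.head? = some u ∧ l.getLast? = some v ∧ pathWeight w l = c}

/-- Weighted diameter. -/
noncomputable def wdiam {V : Type*} (w : V → V → ℝ≥0∞) : ℝ≥0∞ :=
  ⨆ u, ⨆ v, wdist w u v

/-- Vertices of the lower-bound graph `G_{a,b}`: centers `cL`, `cR` and
nodes `l_1, …, l_{2k-1}` and `r_1, …, r_{2k-1}` (index `i : Fin (2k-1)`
represents the node with label `i+1`). -/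
inductive GV (k : ℕ) where
  | cL : GV k
  | cR : GV k
  | left : Fin (2 * k - 1) → GV k
  | right : Fin (2 * k - 1) → GV k

/-- `i` and `j` lie both in `{1,…,k-1}` (upper part) or both in `{k,…,2k-1}` (lower part). -/
def sameSide (k : ℕ) (i j : Fin (2 * k - 1)) : Prop :=
  (i.1 + 1 < k ∧ j.1 + 1 < k) ∨ (k ≤ i.1 + 1 ∧ k ≤ j.1 + 1)

/-- The input-dependent edge between nodes `i+1` and `j+1` given by bit string `a`:
index `m` is mapped to the pair `(m % k, k + m / k)`, and the edge is present iff `a m = 0`. -/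
def inputEdge (k : ℕ) (a : ℕ → Bool) (i j : Fin (2 * k - 1)) : Prop :=
  ∃ m : ℕ, m < k * k ∧ a m = false ∧
    ((i.1 + 1 = m % k ∧ j.1 + 1 = k + m / k) ∨ (j.1 + 1 = m % k ∧ i.1 + 1 = k + m / k))

/-- Edge weights of `G_{a,b}`: weight `1/p` on `(cL, cR)` and on the cut edges `(l_v, r_v)`;
weight `1` from `cL` to all left nodes, from `cR` to all right nodes, inside the cliques
on `L₁, L₂, R₁, R₂` and on input-dependent edges; `⊤` (no edge) otherwise. -/
noncomputable def wgt (k p : ℕ) (a b : ℕ → Bool) : GV k → GV k → ℝ≥0∞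
  | GV.cL, GV.cR => (p : ℝ≥0∞)⁻¹
  | GV.cR, GV.cL => (p : ℝ≥0∞)⁻¹
  | GV.cL, GV.left _ => 1
  | GV.left _, GV.cL => 1
  | GV.cR, GV.right _ => 1
  | GV.right _, GV.cR => 1
  | GV.left i, GV.right j => if i = j then (p : ℝ≥0∞)⁻¹ else ⊤
  | GV.right i, GV.left j => if i = j then (p : ℝ≥0∞)⁻¹ else ⊤
  | GV.left i, GV.left j =>
      if i ≠ j ∧ (sameSide k i j ∨ inputEdge k a i j) then 1 else ⊤
  | GV.right i, GV.right j =>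
      if i ≠ j ∧ (sameSide k i j ∨ inputEdge k b i j) then 1 else ⊤
  | _, _ => ⊤

section Paths

variable {V : Type*}

lemma pathWeight_append_cons (w : V → V → ℝ≥0∞) (l₁ l₂ : List V) (x : V) :
    pathWeight w (l₁ ++ x :: l₂) = pathWeight w (l₁ ++ [x]) + pathWeight w (x :: l₂) := by
  induction l₁ with
  | nil => simp [pathWeight]
  | cons y l₁ ih =>
    cases l₁ with
    | nil => simp [pathWeight]
    | cons z l₁ => simp only [List.cons_append, pathWeight] at ih ⊢; rw [ih, add_assoc]

lemma wdist_le_pathWeight (w : V → V → ℝ≥0∞) {l : List V} {u v : V}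
    (hu : l.head? = some u) (hv : l.getLast? = some v) : wdist w u v ≤ pathWeight w l :=
  sInf_le ⟨l, hu, hv, rfl⟩

lemma wdist_self (w : V → V → ℝ≥0∞) (u : V) : wdist w u u = 0 :=
  nonpos_iff_eq_zero.mp (wdist_le_pathWeight w (l := [u]) rfl rfl)

lemma wdist_le_weight (w : V → V → ℝ≥0∞) (u v : V) : wdist w u v ≤ w u v := by
  simpa [pathWeight] using wdist_le_pathWeight w (l := [u, v]) rfl rfl

lemma wdist_triangle (w : V → V → ℝ≥0∞) (u x v : V) :
    wdist w u v ≤ wdist w u x + wdist w x v := by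
  unfold wdist
  rw [ENNReal.sInf_add]
  refine le_iInf₂ fun _ ⟨l₁, hu, hx₁, hc₁⟩ => ?_
  rw [add_comm, ENNReal.sInf_add]
  refine le_iInf₂ fun _ ⟨l₂, hx₂, hv, hc₂⟩ => ?_
  obtain ⟨l₁, rfl⟩ := List.getLast?_eq_some_iff.mp hx₁
  obtain ⟨l₂, rfl⟩ := List.head?_eq_some_iff.mp hx₂
  rw [← hc₁, ← hc₂, add_comm, ← pathWeight_append_cons]
  refine wdist_le_pathWeight w ?_ ?_
  · cases l₁ <;> simp_all
  · simpa using hv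

lemma wdist_le_wdiam (w : V → V → ℝ≥0∞) (u v : V) : wdist w u v ≤ wdiam w :=
  le_iSup₂ (f := fun u v => wdist w u v) u v

lemma le_add_pathWeight_of_potential {w : V → V → ℝ≥0∞} {φ : V → ℝ≥0∞}
    (hφ : ∀ x y, φ y ≤ φ x + w x y) {u v : V} {l : List V} (hv : (u :: l).getLast? = some v) :
    φ v ≤ φ u + pathWeight w (u :: l) := by
  induction l generalizing u with
  | nil => simp_all [pathWeight]
  | cons y l ih =>
    calc φ v ≤ φ y + pathWeight w (y :: l) := ih hv
      _ ≤ φ u + w u y + pathWeight w (y :: l) := by gcongr; exact hφ u y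
      _ = φ u + pathWeight w (u :: y :: l) := by rw [pathWeight, add_assoc]

lemma le_add_wdist_of_potential {w : V → V → ℝ≥0∞} {φ : V → ℝ≥0∞}
    (hφ : ∀ x y, φ y ≤ φ x + w x y) (u v : V) : φ v ≤ φ u + wdist w u v := by
  simp only [wdist, sInf_eq_iInf, ENNReal.add_iInf]
  refine le_iInf₂ fun _ ⟨l, hu, hv, hc⟩ => ?_
  obtain ⟨l, rfl⟩ := List.head?_eq_some_iff.mp hu
  exact hc ▸ le_add_pathWeight_of_potential hφ hv

end Paths

def GV.center {k : ℕ} : GV k → GV k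
  | GV.cL | GV.left _ => GV.cL
  | GV.cR | GV.right _ => GV.cR

section UpperBound

variable (k p : ℕ) (a b : ℕ → Bool)

lemma wdist_wgt_self_center_le (u : GV k) : wdist (wgt k p a b) u u.center ≤ 1 := by
  cases u <;> simp only [GV.center, wdist_self, zero_le] <;>
    exact (wdist_le_weight _ _ _).trans_eq rfl

lemma wdist_wgt_center_self_le (v : GV k) : wdist (wgt k p a b) v.center v ≤ 1 := by
  cases v <;> simp only [GV.center, wdist_self, zero_le] <;>
    exact (wdist_le_weight _ _ _).trans_eq rfl

lemma wdist_wgt_center_center_le (u v : GV k) :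
    wdist (wgt k p a b) u.center v.center ≤ (p : ℝ≥0∞)⁻¹ := by
  cases u <;> cases v <;> simp only [GV.center, wdist_self, zero_le] <;>
    exact (wdist_le_weight _ _ _).trans_eq rfl

lemma wdiam_wgt_le : wdiam (wgt k p a b) ≤ 2 + (p : ℝ≥0∞)⁻¹ :=
  iSup₂_le fun u v => calc
    wdist (wgt k p a b) u v
        ≤ wdist (wgt k p a b) u u.center + wdist (wgt k p a b) u.center v.center
          + wdist (wgt k p a b) v.center v :=
      (wdist_triangle _ u v.center v).trans (by gcongr; exact wdist_triangle _ _ u.center _)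
    _ ≤ 1 + (p : ℝ≥0∞)⁻¹ + 1 := by
      gcongr
      exacts [wdist_wgt_self_center_le .., wdist_wgt_center_center_le ..,
        wdist_wgt_center_self_le ..]
    _ = 2 + (p : ℝ≥0∞)⁻¹ := by ring

end UpperBound

section Positions

variable {k i : ℕ} {ν μ : Fin (2 * k - 1)}

lemma add_one_lt_and_le_add_one (hν : ν.1 + 1 = i % k) (hμ : μ.1 + 1 = k + i / k) :
    ν.1 + 1 < k ∧ k ≤ μ.1 + 1 := by
  have hk : k ≠ 0 := by rintro rfl; simp at hμ
  exact ⟨hν ▸ Nat.mod_lt i (Nat.pos_of_ne_zero hk), hμ ▸ Nat.le_add_right k _⟩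

lemma not_sameSide (hν : ν.1 + 1 = i % k) (hμ : μ.1 + 1 = k + i / k) : ¬ sameSide k ν μ := by
  have := add_one_lt_and_le_add_one hν hμ
  unfold sameSide; omega

lemma not_inputEdge {a : ℕ → Bool} (ha : a i = true) (hν : ν.1 + 1 = i % k)
    (hμ : μ.1 + 1 = k + i / k) : ¬ inputEdge k a ν μ := by
  have := add_one_lt_and_le_add_one hν hμ
  rintro ⟨m, -, ham, ⟨hνm, hμm⟩ | ⟨hμm, -⟩⟩
  · have hmi : m = i := calc
      m = k * (m / k) + m % k := (Nat.div_add_mod m k).symm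
      _ = k * (i / k) + i % k := by rw [show m / k = i / k by omega, show m % k = i % k by omega]
      _ = i := Nat.div_add_mod i k
    simp [hmi, ha] at ham
  · have := Nat.mod_lt m (show 0 < k by omega)
    omega

end Positions

noncomputable def level {α : Type*} (ν μ j : α) : ℝ≥0∞ :=
  if j = ν then 0 else if j = μ then 2 else 1

lemma level_le_two {α : Type*} (ν μ j : α) : level ν μ j ≤ 2 := by
  unfold level; split_ifs <;> norm_num

lemma level_le_level_add_one {α : Type*} {ν μ i j : α} (h : ¬(i = ν ∧ j = μ)) :
    level ν μ j ≤ level ν μ i + 1 := by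
  unfold level; split_ifs <;> simp_all; norm_num

noncomputable def potential {k : ℕ} (p : ℕ) (ν μ : Fin (2 * k - 1)) : GV k → ℝ≥0∞
  | GV.cL => 1
  | GV.cR => 1 + (p : ℝ≥0∞)⁻¹
  | GV.left j => level ν μ j
  | GV.right j => level ν μ j + (p : ℝ≥0∞)⁻¹

lemma potential_le_add_wgt {k p : ℕ} {a b : ℕ → Bool} {ν μ : Fin (2 * k - 1)}
    (hL : ¬ (sameSide k ν μ ∨ inputEdge k a ν μ))
    (hR : ¬ (sameSide k ν μ ∨ inputEdge k b ν μ)) (x y : GV k) :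
    potential p ν μ y ≤ potential p ν μ x + wgt k p a b x y := by
  cases x <;> cases y <;> simp only [potential, wgt] <;> (try split_ifs with h) <;>
    (try subst_vars)
  -- `simp` closes, among others, all non-edges (weight `⊤`)
  all_goals try simp
  · rw [one_add_one_eq_two]; exact level_le_two ..
  · exact le_add_right le_self_add
  · rw [add_right_comm, one_add_one_eq_two]; gcongr; exact level_le_two ..
  · exact level_le_level_add_one (by rintro ⟨rfl, rfl⟩; exact hL h.2)
  · rw [add_right_comm]; gcongr; exact le_add_self
  · exact le_add_right le_self_add
  · rw [add_right_comm]; gcongr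
    exact level_le_level_add_one (by rintro ⟨rfl, rfl⟩; exact hR h.2)

theorem dist_ge_and_diam_eq_of_not_disjoint_general (k p : ℕ)
    (a b : ℕ → Bool) (i : ℕ) (ha : a i = true) (hb : b i = true)
    (ν μ : Fin (2 * k - 1)) (hν : ν.1 + 1 = i % k) (hμ : μ.1 + 1 = k + i / k) :
    2 + (p : ℝ≥0∞)⁻¹ ≤ wdist (wgt k p a b) (GV.left ν) (GV.right μ) ∧
      wdiam (wgt k p a b) = 2 + (p : ℝ≥0∞)⁻¹ := by
  have hμν : μ ≠ ν := fun h => by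
    have := add_one_lt_and_le_add_one hν hμ
    rw [h] at this; omega
  have hφ : ∀ x y, potential p ν μ y ≤ potential p ν μ x + wgt k p a b x y :=
    potential_le_add_wgt (not_or.mpr ⟨not_sameSide hν hμ, not_inputEdge ha hν hμ⟩)
      (not_or.mpr ⟨not_sameSide hν hμ, not_inputEdge hb hν hμ⟩)
  have lower : 2 + (p : ℝ≥0∞)⁻¹ ≤ wdist (wgt k p a b) (GV.left ν) (GV.right μ) := by
    simpa [potential, level, hμν] using le_add_wdist_of_potential hφ (GV.left ν) (GV.right μ)
  exact ⟨lower, le_antisymm (wdiam_wgt_le k p a b) (lower.trans (wdist_le_wdiam _ _ _))⟩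

/-- if `a` and `b` are not disjoint, witnessed by index `i` with
`a i = b i = 1`, then the distance between `l_ν` and `r_μ` (where `ν = i % k` and
`μ = k + ⌊i/k⌋`) is at least `2 + 1/p`, and consequently the weighted diameter of
`G_{a,b}` equals `2 + 1/p`. -/
theorem dist_ge_and_diam_eq_of_not_disjoint (k p : ℕ) (hk : 2 ≤ k) (hp : 1 ≤ p)
    (a b : ℕ → Bool) (i : ℕ) (hik : i < k * k) (ha : a i = true) (hb : b i = true)
    (ν μ : Fin (2 * k - 1)) (hν : ν.1 + 1 = i % k) (hμ : μ.1 + 1 = k + i / k) :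
    2 + (p : ℝ≥0∞)⁻¹ ≤ wdist (wgt k p a b) (GV.left ν) (GV.right μ) ∧
      wdiam (wgt k p a b) = 2 + (p : ℝ≥0∞)⁻¹ :=
  dist_ge_and_diam_eq_of_not_disjoint_general k p a b i ha hb ν μ hν hμ
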